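/- The record selection reduction preserves and reflects types: Γ ⊢ ⟨aᵢ=Mᵢ | i∈I⟩.a_j : σ if and only if Γ ⊢ M_j : σ, for j ∈ I. -/
import Mathlib


/-- Intersection types with record types: σ,τ ::= α | t | ω | σ→τ | σ∩τ | ⟨a:σ⟩. -/
inductive Ty : Type
  | tvar : ℕ → Ty
  | tconst : ℕ → Ty
  | omega : Ty
  | arrow : Ty → Ty → Ty
  | inter : Ty → Ty → Ty
  | rcd : ℕ → Ty → Ty

/-- The type-inclusion preorder (BCD extended with record axioms). -/
inductive Subt : Ty → Ty → Prop
  | refl (σ) : Subt σ σ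
  | trans {σ τ ρ} : Subt σ τ → Subt τ ρ → Subt σ ρ
  | top (σ) : Subt σ .omega
  | omegaArrow : Subt .omega (.arrow .omega .omega)
  | interLeft (σ τ) : Subt (.inter σ τ) σ
  | interRight (σ τ) : Subt (.inter σ τ) τ
  | arrowInter (σ τ₁ τ₂) : Subt (.inter (.arrow σ τ₁) (.arrow σ τ₂)) (.arrow σ (.inter τ₁ τ₂))
  | interGlb {σ τ₁ τ₂} : Subt σ τ₁ → Subt σ τ₂ → Subt σ (.inter τ₁ τ₂)
  | arrowMono {σ₁ σ₂ τ₁ τ₂} : Subt σ₂ σ₁ → Subt τ₁ τ₂ → Subt (.arrow σ₁ τ₁) (.arrow σ₂ τ₂)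
  | rcdMono {a σ τ} : Subt σ τ → Subt (.rcd a σ) (.rcd a τ)
  | rcdInter (a σ τ) : Subt (.inter (.rcd a σ) (.rcd a τ)) (.rcd a (.inter σ τ))

/-- A finite intersection ⋂ᵢ ⟨aᵢ:σᵢ⟩ of record types (ω for the empty list). -/
def recTy : List (ℕ × Ty) → Ty
  | [] => .omega
  | [(a, σ)] => .rcd a σ
  | (a, σ) :: t => .inter (.rcd a σ) (recTy t)

mutual
/-- Terms of Λ_R. -/
inductive Tm : Type
  | var : ℕ → Tm
  | lit : ℤ → Tm
  | lam : ℕ → Tm → Tm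
  | app : Tm → Tm → Tm
  | rcd : Rcd → Tm
  | sel : Tm → ℕ → Tm
  | mrg : Tm → Rcd → Tm
/-- Record terms. -/
inductive Rcd : Type
  | nil : Rcd
  | cons : ℕ → Tm → Rcd → Rcd
end

def Rcd.find : Rcd → ℕ → Option Tm
  | .nil, _ => none
  | .cons a M r, b => if a = b then some M else r.find b

def Rcd.lbls : Rcd → List ℕ
  | .nil => []
  | .cons a _ r => a :: r.lbls

def Rcd.restrict : Rcd → List ℕ → Rcd
  | .nil, _ => .nil
  | .cons a M r, L => if a ∈ L then r.restrict L else .cons a M (r.restrict L)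

def Rcd.append : Rcd → Rcd → Rcd
  | .nil, s => s
  | .cons a M r, s => .cons a M (r.append s)

/-- The merge of two records: fields of `s` override those of `r`. -/
def Rcd.mergeR (r s : Rcd) : Rcd := (r.restrict s.lbls).append s

mutual
def Tm.subst : Tm → ℕ → Tm → Tm
  | .var y, x, N => if y = x then N else .var y
  | .lit n, _, _ => .lit n
  | .lam y M, x, N => if y = x then .lam y M else .lam y (M.subst x N)
  | .app M₁ M₂, x, N => .app (M₁.subst x N) (M₂.subst x N)
  | .rcd r, x, N => .rcd (r.substR x N)
  | .sel M a, x, N => .sel (M.subst x N) a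
  | .mrg M r, x, N => .mrg (M.subst x N) (r.substR x N)
def Rcd.substR : Rcd → ℕ → Tm → Rcd
  | .nil, _, _ => .nil
  | .cons a M r, x, N => .cons a (M.subst x N) (r.substR x N)
end

mutual
def Tm.fv : Tm → List ℕ
  | .var y => [y]
  | .lit _ => []
  | .lam y M => M.fv.filter (fun z => z ≠ y)
  | .app M N => M.fv ++ N.fv
  | .rcd r => r.fvR
  | .sel M _ => M.fv
  | .mrg M r => M.fv ++ r.fvR
def Rcd.fvR : Rcd → List ℕ
  | .nil => []
  | .cons _ M r => M.fv ++ r.fvR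
end

mutual
/-- One-step reduction: β, record selection, record merge, closed under contexts. -/
inductive Red : Tm → Tm → Prop
  | beta (x M N) : Red (.app (.lam x M) N) (M.subst x N)
  | rsel {r : Rcd} {a M} : r.find a = some M → Red (.sel (.rcd r) a) M
  | mergeRed (r s : Rcd) : Red (.mrg (.rcd r) s) (.rcd (r.mergeR s))
  | lamC {x M M'} : Red M M' → Red (.lam x M) (.lam x M')
  | appL {M M' N} : Red M M' → Red (.app M N) (.app M' N)
  | appR {M N N'} : Red N N' → Red (.app M N) (.app M N')
  | rcdC {r r'} : RedR r r' → Red (.rcd r) (.rcd r')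
  | selC {M M' a} : Red M M' → Red (.sel M a) (.sel M' a)
  | mrgL {M M' r} : Red M M' → Red (.mrg M r) (.mrg M' r)
  | mrgR {M r r'} : RedR r r' → Red (.mrg M r) (.mrg M r')
inductive RedR : Rcd → Rcd → Prop
  | head {a M M' r} : Red M M' → RedR (.cons a M r) (.cons a M' r)
  | tail {a M r r'} : RedR r r' → RedR (.cons a M r) (.cons a M r')
end

def IntTy : Ty := .tconst 0

/-- The intersection type assignment system for Λ_R. -/
inductive Der : (ℕ → Ty) → Tm → Ty → Prop
  | var (Γ x) : Der Γ (.var x) (Γ x)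
  | lit (Γ n) : Der Γ (.lit n) IntTy
  | lamI {Γ x M σ τ} : Der (Function.update Γ x σ) M τ → Der Γ (.lam x M) (.arrow σ τ)
  | appE {Γ M N σ τ} : Der Γ M (.arrow σ τ) → Der Γ N σ → Der Γ (.app M N) τ
  | top (Γ M) : Der Γ M .omega
  | interI {Γ M σ τ} : Der Γ M σ → Der Γ M τ → Der Γ M (.inter σ τ)
  | sub {Γ M σ τ} : Der Γ M σ → Subt σ τ → Der Γ M τ
  | sel {Γ M a σ} : Der Γ M (.rcd a σ) → Der Γ (.sel M a) σ
  | rcdI {Γ} {r : Rcd} {a M σ} : r.find a = some M → Der Γ M σ → Der Γ (.rcd r) (.rcd a σ)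
  | mrgL {Γ M} {r : Rcd} {a σ} : Der Γ M (.rcd a σ) → a ∉ r.lbls → Der Γ (.mrg M r) (.rcd a σ)
  | mrgR {Γ M} {r : Rcd} {a σ} : Der Γ (.rcd r) (.rcd a σ) → Der Γ (.mrg M r) (.rcd a σ)

/-- Projection of a type onto its `a`-record component. -/
def projT (a : ℕ) : Ty → Ty
  | .rcd b τ => if b = a then τ else .omega
  | .inter σ τ => .inter (projT a σ) (projT a τ)
  | _ => .omega

lemma subt_proj {a : ℕ} {σ τ : Ty} (h : Subt σ τ) : Subt (projT a σ) (projT a τ) := by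
  induction h with
  | refl => exact .refl _
  | trans _ _ ih₁ ih₂ => exact .trans ih₁ ih₂
  | top => exact .top _
  | omegaArrow => exact .refl _
  | interLeft σ τ => exact .interLeft _ _
  | interRight σ τ => exact .interRight _ _
  | arrowInter => exact .interLeft _ _
  | interGlb _ _ ih₁ ih₂ => exact .interGlb ih₁ ih₂
  | arrowMono => exact .refl _
  | rcdMono h ih =>
      simp only [projT]; split
      · exact h
      · exact .refl _
  | rcdInter b σ τ =>
      simp only [projT]; split
      · exact .refl _
      · exact .interLeft _ _

lemma der_rcd_proj {Γ : ℕ → Ty} {N : Tm} {τ : Ty} (h : Der Γ N τ) :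
    ∀ (r : Rcd) (a : ℕ) (M : Tm), N = .rcd r → r.find a = some M → Der Γ M (projT a τ) := by
  induction h with
  | top => intro r a M _ _; exact .top _ _
  | interI _ _ ih₁ ih₂ =>
      intro r a M hN hf
      exact .interI (ih₁ r a M hN hf) (ih₂ r a M hN hf)
  | sub _ hs ih =>
      intro r a M hN hf
      exact .sub (ih r a M hN hf) (subt_proj hs)
  | rcdI hf' hd =>
      intro r a M hN hf
      cases hN
      simp only [projT]; split
      · rename_i heq; subst heq
        rw [hf'] at hf; cases hf; exact hd
      · exact .top _ _
  | var => intro _ _ _ h; cases h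
  | lit => intro _ _ _ h; cases h
  | lamI _ _ => intro _ _ _ h; cases h
  | appE _ _ _ _ => intro _ _ _ h; cases h
  | sel _ _ => intro _ _ _ h; cases h
  | mrgL _ _ _ => intro _ _ _ h; cases h
  | mrgR _ _ => intro _ _ _ h; cases h

lemma der_sel_inv {Γ : ℕ → Ty} {N : Tm} {σ : Ty} (h : Der Γ N σ) :
    ∀ (r : Rcd) (a : ℕ) (M : Tm), N = .sel (.rcd r) a → r.find a = some M → Der Γ M σ := by
  induction h with
  | top => intro r a M _ _; exact .top _ _
  | interI _ _ ih₁ ih₂ =>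
      intro r a M hN hf
      exact .interI (ih₁ r a M hN hf) (ih₂ r a M hN hf)
  | sub _ hs ih =>
      intro r a M hN hf
      exact .sub (ih r a M hN hf) hs
  | sel hd _ =>
      intro r a M hN hf
      injection hN with h1 h2; subst h1; subst h2
      have := der_rcd_proj hd _ _ _ rfl hf
      simpa [projT] using this
  | var => intro _ _ _ h; cases h
  | lit => intro _ _ _ h; cases h
  | lamI _ _ => intro _ _ _ h; cases h
  | appE _ _ _ _ => intro _ _ _ h; cases h
  | rcdI _ _ => intro _ _ _ h; cases h
  | mrgL _ _ _ => intro _ _ _ h; cases h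
  | mrgR _ _ => intro _ _ _ h; cases h

/-- record selection reduction preserves and reflects types. -/
theorem rsel_preserves_and_reflects (Γ : ℕ → Ty) (r : Rcd) (a : ℕ) (M : Tm) (σ : Ty)
    (h : r.find a = some M) :
    Der Γ (.sel (.rcd r) a) σ ↔ Der Γ M σ := by
  constructor
  · intro hd; exact der_sel_inv hd r a M rfl h
  · intro hd; exact .sel (.rcdI h hd)
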